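/- Let G be a connected simple graph of order m ≥ 2 and let n ≥ 4. Then the restricted edge-connectivity of the strong product of G with the complete graph Kₙ satisfies λ₂(G ⊠ Kₙ) = min{n²·λ(G), (n − 1)(m + 2e(G)), 2n·δ(G) + 2n − 4}. -/

import Mathlib

open SimpleGraph

/-- The strong product of two simple graphs. -/
def strongProd {α β : Type*} (G : SimpleGraph α) (H : SimpleGraph β) :
    SimpleGraph (α × β) where
  Adj p q := (p.1 = q.1 ∧ H.Adj p.2 q.2) ∨ (p.2 = q.2 ∧ G.Adj p.1 q.1) ∨
    (G.Adj p.1 q.1 ∧ H.Adj p.2 q.2)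
  symm := by
    constructor
    rintro ⟨a, b⟩ ⟨c, d⟩ (⟨h1, h2⟩ | ⟨h1, h2⟩ | ⟨h1, h2⟩)
    · exact Or.inl ⟨h1.symm, h2.symm⟩
    · exact Or.inr (Or.inl ⟨h1.symm, h2.symm⟩)
    · exact Or.inr (Or.inr ⟨h1.symm, h2.symm⟩)
  loopless := by
    constructor
    rintro ⟨a, b⟩ (⟨h1, h2⟩ | ⟨h1, h2⟩ | ⟨h1, h2⟩)
    · exact H.loopless.irrefl b h2
    · exact G.loopless.irrefl a h2
    · exact G.loopless.irrefl a h1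

variable {V : Type*}

/-- The degree of a vertex. -/
noncomputable def deg (G : SimpleGraph V) (v : V) : ℕ := (G.neighborSet v).ncard

/-- The minimum degree δ(G). -/
noncomputable def minDeg (G : SimpleGraph V) : ℕ := sInf {k | ∃ v, deg G v = k}

/-- The number of edges e(G). -/
noncomputable def numEdges (G : SimpleGraph V) : ℕ := G.edgeSet.ncard

/-- An edge-cut: a set of edges whose deletion disconnects the graph. -/
def IsEdgeCut (G : SimpleGraph V) (S : Set (Sym2 V)) : Prop :=
  S ⊆ G.edgeSet ∧ ¬ (G.deleteEdges S).Connected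

/-- The edge-connectivity λ(G). -/
noncomputable def edgeConn (G : SimpleGraph V) : ℕ :=
  sInf {k | ∃ S : Set (Sym2 V), IsEdgeCut G S ∧ S.ncard = k}

/-- A k-restricted edge-cut: an edge-cut such that every component of the
resulting graph has at least k vertices. -/
def IsKRestrictedEdgeCut (G : SimpleGraph V) (k : ℕ) (S : Set (Sym2 V)) : Prop :=
  S ⊆ G.edgeSet ∧ ¬ (G.deleteEdges S).Connected ∧
    ∀ c : (G.deleteEdges S).ConnectedComponent, k ≤ c.supp.ncard

/-- The k-restricted edge-connectivity λ_k(G), equal to +∞ (⊤) if no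
k-restricted edge-cut exists. -/
noncomputable def lamK (G : SimpleGraph V) (k : ℕ) : ℕ∞ :=
  sInf {n : ℕ∞ | ∃ S : Set (Sym2 V), IsKRestrictedEdgeCut G k S ∧ (S.ncard : ℕ∞) = n}

/-- The edge boundary ∂_G(X) = [X, V(G)\X]: edges with exactly one endpoint in X. -/
def edgeBoundary (G : SimpleGraph V) (X : Set V) : Set (Sym2 V) :=
  {e | e ∈ G.edgeSet ∧ ∃ u v, e = s(u, v) ∧ u ∈ X ∧ v ∉ X}

/-- The minimum edge-degree ξ(G) = min over edges uv of d(u) + d(v) - 2. -/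
noncomputable def xiMin (G : SimpleGraph V) : ℕ :=
  sInf {k | ∃ u v, G.Adj u v ∧ k = deg G u + deg G v - 2}

/-- ξ₃(G): minimum size of ∂_G(X) over connected induced subgraphs on 3 vertices. -/
noncomputable def xi3 (G : SimpleGraph V) : ℕ :=
  sInf {k | ∃ X : Set V, X.ncard = 3 ∧ (G.induce X).Connected ∧
    k = (edgeBoundary G X).ncard}

/-- K₂ ⊙ H: the strong product K₂ ⊠ H minus the edges inside the two H-layers.
The two vertices of K₂ are represented by `false` (= a) and `true` (= b). -/
def odotK2 {β : Type*} (H : SimpleGraph β) : SimpleGraph (Bool × β) where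
  Adj p q := p.1 ≠ q.1 ∧ (p.2 = q.2 ∨ H.Adj p.2 q.2)
  symm := by
    constructor
    rintro ⟨a, y⟩ ⟨b, z⟩ ⟨h1, h2⟩
    exact ⟨h1.symm, h2.elim (fun h => Or.inl h.symm) (fun h => Or.inr h.symm)⟩
  loopless := by
    constructor
    rintro ⟨a, y⟩ ⟨h1, _⟩
    exact h1 rfl

section General

open Finset

open scoped Classical

variable {β : Type*}

lemma mem_edgeBoundary_iff {Γ : SimpleGraph β} {X : Set β} {u v : β} :
    s(u, v) ∈ edgeBoundary Γ X ↔ Γ.Adj u v ∧ ((u ∈ X ∧ v ∉ X) ∨ (v ∈ X ∧ u ∉ X)) := by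
  constructor
  · rintro ⟨he, a, b, hab, ha, hb⟩
    have hadj : Γ.Adj u v := by simpa using he
    rcases Sym2.eq_iff.1 hab with ⟨h1, h2⟩ | ⟨h1, h2⟩
    · subst h1; subst h2; exact ⟨hadj, Or.inl ⟨ha, hb⟩⟩
    · subst h1; subst h2; exact ⟨hadj, Or.inr ⟨ha, hb⟩⟩
  · rintro ⟨hadj, ⟨hu, hv⟩ | ⟨hv, hu⟩⟩
    · exact ⟨by simpa using hadj, u, v, rfl, hu, hv⟩
    · exact ⟨by simpa using hadj, v, u, Sym2.eq_swap, hv, hu⟩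

lemma edgeBoundary_subset_edgeSet (Γ : SimpleGraph β) (X : Set β) :
    edgeBoundary Γ X ⊆ Γ.edgeSet := fun _ he => he.1

lemma not_mem_edgeBoundary_of_both {Γ : SimpleGraph β} {X : Set β} {u v : β}
    (h : (u ∈ X ∧ v ∈ X) ∨ (u ∉ X ∧ v ∉ X)) : s(u, v) ∉ edgeBoundary Γ X := by
  intro hmem
  rcases (mem_edgeBoundary_iff.1 hmem).2 with ⟨h1, h2⟩ | ⟨h1, h2⟩ <;> tauto

/-- orientation: boundary edges are counted by ordered pairs from X to Xᶜ -/
lemma edgeBoundary_ncard [Fintype β] (Γ : SimpleGraph β) (X : Set β) :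
    (edgeBoundary Γ X).ncard
      = (univ.filter fun p : β × β => Γ.Adj p.1 p.2 ∧ p.1 ∈ X ∧ p.2 ∉ X).card := by
  have himg : edgeBoundary Γ X
      = (fun p : β × β => s(p.1, p.2)) ''
        {p : β × β | Γ.Adj p.1 p.2 ∧ p.1 ∈ X ∧ p.2 ∉ X} := by
    ext e
    induction e with
    | h u v =>
      rw [mem_edgeBoundary_iff]
      constructor
      · rintro ⟨hadj, ⟨hu, hv⟩ | ⟨hv, hu⟩⟩
        · exact ⟨(u, v), ⟨hadj, hu, hv⟩, rfl⟩
        · exact ⟨(v, u), ⟨hadj.symm, hv, hu⟩, Sym2.eq_swap.symm⟩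
      · rintro ⟨⟨a, b⟩, ⟨hadj, ha, hb⟩, hab⟩
        rcases Sym2.eq_iff.1 hab with ⟨h1, h2⟩ | ⟨h1, h2⟩
        · subst h1; subst h2; exact ⟨hadj, Or.inl ⟨ha, hb⟩⟩
        · subst h1; subst h2; exact ⟨hadj.symm, Or.inr ⟨ha, hb⟩⟩
  rw [himg]
  have hinj : Set.InjOn (fun p : β × β => s(p.1, p.2))
      {p : β × β | Γ.Adj p.1 p.2 ∧ p.1 ∈ X ∧ p.2 ∉ X} := by
    rintro ⟨a, b⟩ ⟨ha, ha1, ha2⟩ ⟨c, d⟩ ⟨hc, hc1, hc2⟩ h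
    simp only [Sym2.eq_iff] at h
    rcases h with ⟨h1, h2⟩ | ⟨h1, h2⟩
    · simp [h1, h2]
    · subst h1; subst h2; exact absurd hc1 ha2
  rw [Set.ncard_image_of_injOn hinj]
  have : {p : β × β | Γ.Adj p.1 p.2 ∧ p.1 ∈ X ∧ p.2 ∉ X}
      = ↑(univ.filter fun p : β × β => Γ.Adj p.1 p.2 ∧ p.1 ∈ X ∧ p.2 ∉ X) := by
    ext p; simp
  rw [this, Set.ncard_coe_finset]

lemma reach_stay {Γ : SimpleGraph β} {X : Set β} {u v : β}
    (h : (Γ.deleteEdges (edgeBoundary Γ X)).Reachable u v) (hu : u ∈ X) : v ∈ X := by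
  obtain ⟨w⟩ := h
  induction w with
  | nil => exact hu
  | cons hadj _ ih =>
    rename_i a b c w
    rw [SimpleGraph.deleteEdges_adj] at hadj
    obtain ⟨hab, hnb⟩ := hadj
    by_cases hb : b ∈ X
    · exact ih hb
    · exact absurd (mem_edgeBoundary_iff.2 ⟨hab, Or.inl ⟨hu, hb⟩⟩) hnb

lemma edgeBoundary_disconnects {Γ : SimpleGraph β} {X : Set β} {u v : β}
    (hu : u ∈ X) (hv : v ∉ X) : ¬ (Γ.deleteEdges (edgeBoundary Γ X)).Connected := by
  intro hc
  exact hv (reach_stay (hc.preconnected u v) hu)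

lemma edgeBoundary_supp_subset {Γ : SimpleGraph β} {S : Set (Sym2 β)}
    (C : (Γ.deleteEdges S).ConnectedComponent) :
    edgeBoundary Γ C.supp ⊆ S := by
  intro e he
  induction e with
  | h u v =>
    obtain ⟨hadj, hor⟩ := mem_edgeBoundary_iff.1 he
    by_contra hns
    have hadj' : (Γ.deleteEdges S).Adj u v := SimpleGraph.deleteEdges_adj.2 ⟨hadj, hns⟩
    have heq : (Γ.deleteEdges S).connectedComponentMk u
        = (Γ.deleteEdges S).connectedComponentMk v :=
      SimpleGraph.ConnectedComponent.sound hadj'.reachable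
    rcases hor with ⟨h1, h2⟩ | ⟨h1, h2⟩ <;>
      simp only [SimpleGraph.ConnectedComponent.mem_supp_iff] at h1 h2 <;>
      [exact h2 (heq ▸ h1); exact h2 (heq.symm ▸ h1)]

lemma supp_two_le {Γ : SimpleGraph β} {S : Set (Sym2 β)} [Finite β]
    (h : ∀ v : β, ∃ u, (Γ.deleteEdges S).Adj v u)
    (C : (Γ.deleteEdges S).ConnectedComponent) : 2 ≤ C.supp.ncard := by
  induction C using SimpleGraph.ConnectedComponent.ind with
  | _ v =>
    obtain ⟨u, hadj⟩ := h v
    have hv : v ∈ ((Γ.deleteEdges S).connectedComponentMk v).supp := rfl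
    have hu : u ∈ ((Γ.deleteEdges S).connectedComponentMk v).supp := by
      rw [SimpleGraph.ConnectedComponent.mem_supp_iff]
      exact (SimpleGraph.ConnectedComponent.sound hadj.reachable).symm
    have : 1 < ((Γ.deleteEdges S).connectedComponentMk v).supp.ncard := by
      rw [Set.one_lt_ncard (Set.toFinite _)]
      exact ⟨v, hv, u, hu, hadj.ne⟩
    omega

lemma card_filter_ext2 {γ : Type*} [Fintype γ] (p q : γ → Prop)
    (h1 : DecidablePred p) (h2 : DecidablePred q) (h : ∀ a, p a ↔ q a) :
    (@Finset.filter _ p h1 univ).card = (@Finset.filter _ q h2 univ).card := by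
  refine Finset.card_nbij' id id (fun a ha => ?_) (fun a ha => ?_)
    (fun a _ => rfl) (fun a _ => rfl)
  · exact Finset.mem_filter.2 ⟨Finset.mem_univ _, (h a).1 (Finset.mem_filter.1 ha).2⟩
  · exact Finset.mem_filter.2 ⟨Finset.mem_univ _, (h a).2 (Finset.mem_filter.1 ha).2⟩

/-- fiberwise counting of pairs -/
lemma card_pair_filter_eq_sum {γ γ' : Type*} [Fintype γ] [Fintype γ'] (q : γ → γ' → Prop) :
    (univ.filter fun p : γ × γ' => q p.1 p.2).card
      = ∑ a : γ, (univ.filter fun c => q a c).card := by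
  rw [Finset.card_eq_sum_card_fiberwise (f := Prod.fst) (t := univ) (fun x _ => mem_univ _)]
  refine Finset.sum_congr rfl fun a _ => ?_
  refine Finset.card_nbij' (fun p => p.2) (fun c => (a, c)) ?_ ?_ ?_ ?_
  · rintro ⟨a', c⟩ hp
    simp only [Finset.mem_coe, mem_filter, mem_univ, true_and] at hp ⊢
    obtain ⟨h1, h2⟩ := hp
    subst h2; exact h1
  · intro c hc
    simp only [Finset.mem_coe, mem_filter, mem_univ, true_and] at hc ⊢
    exact ⟨hc, trivial⟩
  · rintro ⟨a', c⟩ hp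
    simp only [Finset.mem_coe, mem_filter, mem_univ, true_and] at hp
    exact Prod.ext hp.2.symm rfl
  · intro c _; rfl

end General
section Product

open Finset
open scoped Classical

variable {α : Type*} [Fintype α]

lemma strongProd_adj_iff (G : SimpleGraph α) {n : ℕ} (p q : α × Fin n) :
    (strongProd G (completeGraph (Fin n))).Adj p q
      ↔ (p.1 = q.1 ∧ p.2 ≠ q.2) ∨ G.Adj p.1 q.1 := by
  obtain ⟨a, b⟩ := p; obtain ⟨c, d⟩ := q
  show (a = c ∧ (completeGraph (Fin n)).Adj b d) ∨ (b = d ∧ G.Adj a c) ∨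
      (G.Adj a c ∧ (completeGraph (Fin n)).Adj b d) ↔ _
  simp only [completeGraph, ne_eq]
  constructor
  · rintro (⟨h1, h2⟩ | ⟨h1, h2⟩ | ⟨h1, h2⟩)
    · exact Or.inl ⟨h1, h2⟩
    · exact Or.inr h2
    · exact Or.inr h1
  · rintro (⟨h1, h2⟩ | h)
    · exact Or.inl ⟨h1, h2⟩
    · by_cases hbd : b = d
      · exact Or.inr (Or.inl ⟨hbd, h⟩)
      · exact Or.inr (Or.inr ⟨h, hbd⟩)

/-- layer count -/
noncomputable def xc {n : ℕ} (X : Set (α × Fin n)) (a : α) : ℕ :=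
  (univ.filter fun b : Fin n => (a, b) ∈ X).card

lemma xc_le {n : ℕ} (X : Set (α × Fin n)) (a : α) : xc X a ≤ n := by
  classical
  calc xc X a ≤ (univ : Finset (Fin n)).card := Finset.card_filter_le _ _
  _ = n := by simp

lemma card_filter_not_mem {n : ℕ} (X : Set (α × Fin n)) (a : α) :
    (univ.filter fun d : Fin n => (a, d) ∉ X).card = n - xc X a := by
  classical
  rw [Finset.filter_not, Finset.card_sdiff_of_subset (Finset.filter_subset _ _)]
  simp [xc]

lemma card_filter_and_prod {γ γ' : Type*} [Fintype γ] [Fintype γ'] (p : γ → Prop) (q : γ' → Prop) :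
    (univ.filter fun c : γ × γ' => p c.1 ∧ q c.2).card
      = (univ.filter p).card * (univ.filter q).card := by
  rw [← Finset.univ_product_univ, Finset.filter_product p q, Finset.card_product]

lemma prod_boundary_card (G : SimpleGraph α) {n : ℕ} (X : Set (α × Fin n)) :
    (edgeBoundary (strongProd G (completeGraph (Fin n))) X).ncard
      = ∑ a : α, xc X a * (n - xc X a)
        + ∑ p ∈ (univ.filter fun p : α × α => G.Adj p.1 p.2),
            xc X p.1 * (n - xc X p.2) := by
  rw [edgeBoundary_ncard]
  have hcong : (univ.filter fun p : (α × Fin n) × (α × Fin n) =>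
        (strongProd G (completeGraph (Fin n))).Adj p.1 p.2 ∧ p.1 ∈ X ∧ p.2 ∉ X)
      = univ.filter fun p : (α × Fin n) × (α × Fin n) =>
          (p.1.1 = p.2.1 ∧ p.1 ∈ X ∧ p.2 ∉ X) ∨
          (G.Adj p.1.1 p.2.1 ∧ p.1 ∈ X ∧ p.2 ∉ X) := by
    apply Finset.filter_congr
    rintro ⟨⟨a, b⟩, ⟨c, d⟩⟩ _
    rw [strongProd_adj_iff]
    constructor
    · rintro ⟨(⟨h1, _⟩ | h), hm, hnm⟩
      · exact Or.inl ⟨h1, hm, hnm⟩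
      · exact Or.inr ⟨h, hm, hnm⟩
    · rintro (⟨h1, hm, hnm⟩ | ⟨h, hm, hnm⟩)
      · refine ⟨Or.inl ⟨h1, ?_⟩, hm, hnm⟩
        intro hbd
        apply hnm
        have : ((a, b) : α × Fin n) = (c, d) := by
          simp only at h1 hbd; simp [h1, hbd]
        rwa [← this]
      · exact ⟨Or.inr h, hm, hnm⟩
  rw [hcong, Finset.filter_or,
    Finset.card_union_of_disjoint]
  · congr 1
    · -- diagonal part
      have hbij : (univ.filter fun p : (α × Fin n) × (α × Fin n) =>
            p.1.1 = p.2.1 ∧ p.1 ∈ X ∧ p.2 ∉ X).card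
          = (univ.filter fun t : α × (Fin n × Fin n) =>
              (t.1, t.2.1) ∈ X ∧ (t.1, t.2.2) ∉ X).card := by
        refine Finset.card_nbij' (fun p => (p.1.1, (p.1.2, p.2.2)))
          (fun t => ((t.1, t.2.1), (t.1, t.2.2))) ?_ ?_ ?_ ?_
        · rintro ⟨⟨a, b⟩, ⟨c, d⟩⟩ hp
          obtain ⟨h1, h2, h3⟩ := (mem_filter.1 hp).2
          have h1' : a = c := h1
          subst h1' 
          exact mem_filter.2 ⟨mem_univ _, h2, h3⟩
        · rintro ⟨a, ⟨b, d⟩⟩ ht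
          obtain ⟨h2, h3⟩ := (mem_filter.1 ht).2
          exact mem_filter.2 ⟨mem_univ _, rfl, h2, h3⟩
        · rintro ⟨⟨a, b⟩, ⟨c, d⟩⟩ hp
          obtain ⟨h1, -, -⟩ := (mem_filter.1 hp).2
          have h1' : a = c := h1
          subst h1' 
          rfl
        · rintro ⟨a, ⟨b, d⟩⟩ _
          rfl
      rw [hbij]
      refine ((card_filter_ext2 _ _ _ _ (fun _ => Iff.rfl)).trans (card_pair_filter_eq_sum
        (fun (a : α) (bd : Fin n × Fin n) => (a, bd.1) ∈ X ∧ (a, bd.2) ∉ X))).trans ?_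
      refine Finset.sum_congr rfl fun a _ => ?_
      refine ((card_filter_ext2 _ _ _ _ (fun _ => Iff.rfl)).trans
        (card_filter_and_prod (fun b => (a, b) ∈ X) (fun d => (a, d) ∉ X))).trans ?_
      have f1 : (univ.filter fun b : Fin n => (a, b) ∈ X).card = xc X a :=
        card_filter_ext2 _ _ _ _ (fun _ => Iff.rfl)
      rw [f1]
      congr 1
      exact (card_filter_ext2 _ _ _ _ (fun _ => Iff.rfl)).trans (card_filter_not_mem X a)
    · -- adjacent part
      have hbij : (univ.filter fun p : (α × Fin n) × (α × Fin n) =>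
            G.Adj p.1.1 p.2.1 ∧ p.1 ∈ X ∧ p.2 ∉ X).card
          = (univ.filter fun t : (α × α) × (Fin n × Fin n) =>
              G.Adj t.1.1 t.1.2 ∧ ((t.1.1, t.2.1) ∈ X ∧ (t.1.2, t.2.2) ∉ X)).card := by
        refine Finset.card_nbij' (fun p => ((p.1.1, p.2.1), (p.1.2, p.2.2)))
          (fun t => ((t.1.1, t.2.1), (t.1.2, t.2.2))) ?_ ?_ ?_ ?_
        · rintro ⟨⟨a, b⟩, ⟨c, d⟩⟩ hp
          simp only [Finset.mem_coe, mem_filter, mem_univ, true_and] at hp ⊢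
          exact ⟨hp.1, hp.2.1, hp.2.2⟩
        · rintro ⟨⟨a, c⟩, ⟨b, d⟩⟩ ht
          simp only [Finset.mem_coe, mem_filter, mem_univ, true_and] at ht ⊢
          exact ⟨ht.1, ht.2.1, ht.2.2⟩
        · rintro ⟨⟨a, b⟩, ⟨c, d⟩⟩ _; rfl
        · rintro ⟨⟨a, c⟩, ⟨b, d⟩⟩ _; rfl
      rw [hbij]
      refine ((card_filter_ext2 _ _ _ _ (fun _ => Iff.rfl)).trans (card_pair_filter_eq_sum
        (fun (ac : α × α) (bd : Fin n × Fin n) =>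
          G.Adj ac.1 ac.2 ∧ ((ac.1, bd.1) ∈ X ∧ (ac.2, bd.2) ∉ X)))).trans ?_
      rw [Finset.sum_filter]
      refine Finset.sum_congr rfl fun ac _ => ?_
      by_cases hadj : G.Adj ac.1 ac.2
      · rw [if_pos hadj]
        refine ((card_filter_ext2 _ _ _ _ (fun c => and_iff_right hadj)).trans
          (card_filter_and_prod (fun b => (ac.1, b) ∈ X) (fun d => (ac.2, d) ∉ X))).trans ?_
        have f1 : (univ.filter fun b : Fin n => (ac.1, b) ∈ X).card = xc X ac.1 :=
          card_filter_ext2 _ _ _ _ (fun _ => Iff.rfl)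
        rw [f1]
        congr 1
        exact (card_filter_ext2 _ _ _ _ (fun _ => Iff.rfl)).trans (card_filter_not_mem X ac.2)
      · rw [if_neg hadj]
        refine (card_filter_ext2 _ (fun _ : Fin n × Fin n => False) _
          (fun _ => instDecidableFalse) (fun c => iff_false_intro fun hc => hadj hc.1)).trans ?_
        simp
  · -- disjointness
    rw [Finset.disjoint_filter]
    rintro ⟨⟨a, b⟩, ⟨c, d⟩⟩ _ ⟨h1, _, _⟩ ⟨h2, _, _⟩
    simp only at h1 h2
    subst h1
    exact G.loopless.irrefl a h2

end Product
section Counts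

open Finset
open scoped Classical

variable {α : Type*} [Fintype α]

lemma ncard_eq_sum_xc {n : ℕ} (X : Set (α × Fin n)) :
    X.ncard = ∑ a : α, xc X a := by
  have h1 : X.ncard = (univ.filter fun p : α × Fin n => p ∈ X).card := by
    rw [← Set.ncard_coe_finset]
    congr 1
    ext p; simp
  rw [h1]
  refine ((card_filter_ext2 _ (fun p : α × Fin n => (p.1, p.2) ∈ X) _ _
    (fun p => Iff.rfl)).trans
    (card_pair_filter_eq_sum (fun (a : α) (b : Fin n) => (a, b) ∈ X))).trans ?_
  exact Finset.sum_congr rfl fun a _ => card_filter_ext2 _ _ _ _ (fun _ => Iff.rfl)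

lemma ncard_compl_eq_sum_xc {n : ℕ} (X : Set (α × Fin n)) :
    Xᶜ.ncard = ∑ a : α, (n - xc X a) := by
  have h1 : Xᶜ.ncard = (univ.filter fun p : α × Fin n => p ∉ X).card := by
    rw [← Set.ncard_coe_finset]
    congr 1
    ext p; simp
  rw [h1]
  refine ((card_filter_ext2 _ (fun p : α × Fin n => (p.1, p.2) ∉ X) _ _
    (fun p => Iff.rfl)).trans
    (card_pair_filter_eq_sum (fun (a : α) (b : Fin n) => (a, b) ∉ X))).trans ?_
  refine Finset.sum_congr rfl fun a _ => ?_
  exact (card_filter_ext2 _ _ _ _ (fun _ => Iff.rfl)).trans (card_filter_not_mem X a)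

lemma deg_eq_card_filter (G : SimpleGraph α) (v : α) :
    deg G v = (univ.filter fun c => G.Adj v c).card := by
  have h1 : G.neighborSet v = ↑(univ.filter fun c => G.Adj v c) := by ext c; simp
  rw [deg, h1, Set.ncard_coe_finset]

lemma minDeg_le_deg (G : SimpleGraph α) (v : α) : minDeg G ≤ deg G v :=
  Nat.sInf_le ⟨v, rfl⟩

lemma exists_deg_eq_minDeg (G : SimpleGraph α) [Nonempty α] :
    ∃ v, deg G v = minDeg G := by
  have : minDeg G ∈ {k | ∃ v, deg G v = k} :=
    Nat.sInf_mem ⟨deg G (Classical.arbitrary α), _, rfl⟩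
  exact this

lemma exists_adj_of_connected {G : SimpleGraph α} (hG : G.Connected)
    (hm : 2 ≤ Fintype.card α) (v : α) : ∃ u, G.Adj v u := by
  obtain ⟨u, hne⟩ := Fintype.exists_ne_of_one_lt_card (by omega) v
  obtain ⟨w⟩ := hG.preconnected v u
  cases w with
  | nil => exact absurd rfl (Ne.symm hne)
  | cons h _ => exact ⟨_, h⟩

lemma one_le_minDeg {G : SimpleGraph α} (hG : G.Connected)
    (hm : 2 ≤ Fintype.card α) : 1 ≤ minDeg G := by
  have hne : Nonempty α := Fintype.card_pos_iff.1 (by omega)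
  obtain ⟨v, hv⟩ := exists_deg_eq_minDeg G
  rw [← hv]
  obtain ⟨u, hu⟩ := exists_adj_of_connected hG hm v
  exact (Set.ncard_pos (Set.toFinite _)).2 ⟨u, hu⟩

lemma one_le_deg {G : SimpleGraph α} (hG : G.Connected)
    (hm : 2 ≤ Fintype.card α) (v : α) : 1 ≤ deg G v := by
  obtain ⟨u, hu⟩ := exists_adj_of_connected hG hm v
  exact (Set.ncard_pos (Set.toFinite _)).2 ⟨u, hu⟩

lemma numEdges_eq (G : SimpleGraph α) [DecidableRel G.Adj] :
    numEdges G = G.edgeFinset.card := by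
  rw [numEdges, ← Nat.card_coe_set_eq, Nat.card_eq_fintype_card,
    ← Set.toFinset_card]
  congr 1

lemma adjP_card (G : SimpleGraph α) :
    (univ.filter fun p : α × α => G.Adj p.1 p.2).card = 2 * numEdges G := by
  rw [card_pair_filter_eq_sum (fun (a : α) (c : α) => G.Adj a c)]
  have h1 : ∀ a : α, (univ.filter fun c => G.Adj a c).card = G.degree a := by
    intro a
    rw [← SimpleGraph.neighborFinset_eq_filter]
    rfl
  rw [Finset.sum_congr rfl (fun a _ => h1 a),
    SimpleGraph.sum_degrees_eq_twice_card_edges, numEdges_eq G]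

lemma deg_eq_degFilter (G : SimpleGraph α) (v : α) :
    deg G v = (univ.filter fun c => G.Adj v c).card := deg_eq_card_filter G v

/-- group a sum over ordered adjacent pairs by the first coordinate -/
lemma sum_adjP_eq (G : SimpleGraph α) (g : α → α → ℕ) :
    ∑ p ∈ (univ.filter fun p : α × α => G.Adj p.1 p.2), g p.1 p.2
      = ∑ a : α, ∑ c ∈ (univ.filter fun c => G.Adj a c), g a c := by
  rw [← Finset.sum_fiberwise_of_maps_to
    (t := (univ : Finset α)) (g := Prod.fst)
    (fun p _ => mem_univ (Prod.fst p)) (fun p : α × α => g p.1 p.2)]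
  refine Finset.sum_congr rfl fun a _ => ?_
  refine Finset.sum_nbij' (fun p => p.2) (fun c => (a, c)) ?_ ?_ ?_ ?_ ?_
  · rintro ⟨a', c⟩ hp
    rw [mem_filter] at hp
    obtain ⟨hp1, h2⟩ := hp
    rw [mem_filter] at hp1
    have h2' : a' = a := h2
    subst h2'
    exact mem_filter.2 ⟨mem_univ _, hp1.2⟩
  · intro c hc
    exact mem_filter.2 ⟨mem_filter.2 ⟨mem_univ _, (mem_filter.1 hc).2⟩, rfl⟩
  · rintro ⟨a', c⟩ hp
    rw [mem_filter] at hp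
    have h2' : a' = a := hp.2
    subst h2'
    rfl
  · intro c _; rfl
  · rintro ⟨a', c⟩ hp
    rw [mem_filter] at hp
    have h2' : a' = a := hp.2
    subst h2'
    rfl

/-- swap a sum over ordered adjacent pairs -/
lemma sum_adjP_swap (G : SimpleGraph α) (g : α → α → ℕ) :
    ∑ p ∈ (univ.filter fun p : α × α => G.Adj p.1 p.2), g p.1 p.2
      = ∑ p ∈ (univ.filter fun p : α × α => G.Adj p.1 p.2), g p.2 p.1 := by
  refine Finset.sum_nbij' Prod.swap Prod.swap
    (fun p hp => ?_) (fun p hp => ?_) (fun p _ => rfl) (fun p _ => rfl) (fun p _ => rfl)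
  · rw [mem_filter] at hp ⊢
    exact ⟨mem_univ _, hp.2.symm⟩
  · rw [mem_filter] at hp ⊢
    exact ⟨mem_univ _, hp.2.symm⟩

end Counts
section Numeric

lemma mul_bound1 {x n : ℕ} (h1 : 1 ≤ x) (h2 : x ≤ n - 1) (hn : 1 ≤ n) :
    n - 1 ≤ x * (n - x) := by
  have hxn : x ≤ n := le_trans h2 (Nat.sub_le n 1)
  zify [hxn, hn]
  have h2' : (x : ℤ) ≤ n - 1 := by
    have := h2
    zify [hn] at this
    exact this
  nlinarith [mul_nonneg (sub_nonneg.2 (show (1 : ℤ) ≤ x by exact_mod_cast h1))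
    (sub_nonneg.2 h2')]

lemma pair_bound {xa ya xb yb n : ℕ} (hn : 1 ≤ n)
    (ha : n - 1 ≤ xa * ya) (hb : n - 1 ≤ xb * yb) :
    2 * (n - 1) ≤ xa * yb + xb * ya := by
  zify [hn] at ha hb ⊢
  have hprod : ((n : ℤ) - 1) * ((n : ℤ) - 1) ≤ (xa * ya) * (xb * yb) := by
    have h0 : (0 : ℤ) ≤ n - 1 := by
      have : (1 : ℤ) ≤ n := by exact_mod_cast hn
      linarith
    exact mul_le_mul ha hb h0 (by positivity)
  by_contra hcon
  push_neg at hcon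
  set u : ℤ := (xa : ℤ) * yb with hu
  set v : ℤ := (xb : ℤ) * ya with hv
  have hu0 : 0 ≤ u := by positivity
  have hv0 : 0 ≤ v := by positivity
  have hk0 : 0 ≤ (n : ℤ) - 1 := by
    have : (1 : ℤ) ≤ n := by exact_mod_cast hn
    linarith
  have hsq : (u + v) * (u + v) < (2 * ((n : ℤ) - 1)) * (2 * ((n : ℤ) - 1)) := by
    apply mul_self_lt_mul_self (by positivity) hcon
  have h4uv : 4 * (u * v) ≤ (u + v) * (u + v) := by nlinarith [sq_nonneg (u - v)]
  have heq : u * v = ((xa : ℤ) * ya) * ((xb : ℤ) * yb) := by rw [hu, hv]; ring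
  nlinarith

end Numeric
section CaseFZ

open Finset
open scoped Classical

variable {α : Type*} [Fintype α]

lemma edgeConn_le_boundary (G : SimpleGraph α) {B : Set α} {u v : α}
    (hu : u ∈ B) (hv : v ∉ B) : edgeConn G ≤ (edgeBoundary G B).ncard :=
  Nat.sInf_le ⟨edgeBoundary G B,
    ⟨edgeBoundary_subset_edgeSet G B, edgeBoundary_disconnects hu hv⟩, rfl⟩

lemma caseFZ (G : SimpleGraph α) (n : ℕ) (x : α → ℕ) (hx : ∀ a, x a ≤ n)
    (hF : ∃ a, x a = n) (hZ : ∃ a, x a = 0) :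
    n ^ 2 * edgeConn G
      ≤ ∑ p ∈ (univ.filter fun p : α × α => G.Adj p.1 p.2), x p.1 * (n - x p.2) := by
  obtain ⟨aF, haF⟩ := hF
  obtain ⟨aZ, haZ⟩ := hZ
  -- per-threshold cut bound
  have hk : ∀ k ∈ Finset.range n, edgeConn G ≤
      ∑ p ∈ (univ.filter fun p : α × α => G.Adj p.1 p.2),
        (if x p.2 ≤ k ∧ k < x p.1 then 1 else 0) := by
    intro k hkn
    rw [Finset.mem_range] at hkn
    have hcut : edgeConn G ≤ (edgeBoundary G {a | k < x a}).ncard := by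
      refine edgeConn_le_boundary G (u := aF) (v := aZ) ?_ ?_
      · show k < x aF
        omega
      · show ¬ k < x aZ
        omega
    refine hcut.trans (le_of_eq ?_)
    rw [edgeBoundary_ncard, Finset.card_filter]
    refine (Finset.sum_congr rfl fun p _ => ?_).trans
      (Finset.sum_filter (fun p : α × α => G.Adj p.1 p.2)
        (fun p => if x p.2 ≤ k ∧ k < x p.1 then 1 else 0)).symm
    by_cases hadj : G.Adj p.1 p.2
    · by_cases hc : x p.2 ≤ k ∧ k < x p.1
      · rw [if_pos ⟨hadj, hc.2, by simp only [Set.mem_setOf_eq]; omega⟩,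
          if_pos hadj, if_pos hc]
      · rw [if_neg, if_pos hadj, if_neg hc]
        rintro ⟨-, h2, h3⟩
        simp only [Set.mem_setOf_eq] at h2 h3
        exact hc ⟨by omega, h2⟩
    · rw [if_neg (fun hcon => hadj hcon.1), if_neg hadj]
  -- sum over thresholds
  have hsum : n * edgeConn G ≤
      ∑ k ∈ Finset.range n, ∑ p ∈ (univ.filter fun p : α × α => G.Adj p.1 p.2),
        (if x p.2 ≤ k ∧ k < x p.1 then 1 else 0) := by
    calc n * edgeConn G = ∑ _k ∈ Finset.range n, edgeConn G := by
          rw [Finset.sum_const, Finset.card_range, smul_eq_mul]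
      _ ≤ _ := Finset.sum_le_sum hk
  rw [Finset.sum_comm] at hsum
  -- per-pair bound
  have hpair : ∀ p : α × α, G.Adj p.1 p.2 →
      n * ∑ k ∈ Finset.range n, (if x p.2 ≤ k ∧ k < x p.1 then 1 else 0)
        ≤ x p.1 * (n - x p.2) := by
    intro p _
    have h1 : ∑ k ∈ Finset.range n, (if x p.2 ≤ k ∧ k < x p.1 then 1 else 0)
        ≤ x p.1 - x p.2 := by
      rw [← Finset.sum_filter, Finset.sum_const, smul_eq_mul, mul_one]
      calc ((Finset.range n).filter fun k => x p.2 ≤ k ∧ k < x p.1).card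
          ≤ (Finset.Ico (x p.2) (x p.1)).card := by
            apply Finset.card_le_card
            intro k hkk
            rw [Finset.mem_filter] at hkk
            rw [Finset.mem_Ico]
            exact hkk.2
        _ = x p.1 - x p.2 := Nat.card_Ico _ _
    calc n * ∑ k ∈ Finset.range n, (if x p.2 ≤ k ∧ k < x p.1 then 1 else 0)
        ≤ n * (x p.1 - x p.2) := Nat.mul_le_mul_left n h1
      _ ≤ x p.1 * (n - x p.2) := by
          rcases le_or_gt (x p.1) (x p.2) with hle | hlt
          · simp [Nat.sub_eq_zero_of_le hle]
          · have h2 : x p.2 ≤ x p.1 := le_of_lt hlt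
            have h3 : x p.1 ≤ n := hx p.1
            have h4 : x p.2 ≤ n := hx p.2
            zify [h2, h4]
            nlinarith [hx p.1, hx p.2,
              mul_le_mul_of_nonneg_left (show (x p.1 : ℤ) ≤ n by exact_mod_cast h3)
                (show (0 : ℤ) ≤ x p.2 by positivity)]
  calc n ^ 2 * edgeConn G = n * (n * edgeConn G) := by ring
    _ ≤ n * ∑ p ∈ (univ.filter fun p : α × α => G.Adj p.1 p.2),
          ∑ k ∈ Finset.range n, (if x p.2 ≤ k ∧ k < x p.1 then 1 else 0) :=
        Nat.mul_le_mul_left n hsum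
    _ = ∑ p ∈ (univ.filter fun p : α × α => G.Adj p.1 p.2),
          n * ∑ k ∈ Finset.range n, (if x p.2 ≤ k ∧ k < x p.1 then 1 else 0) := by
        rw [Finset.mul_sum]
    _ ≤ _ := by
        refine Finset.sum_le_sum fun p hp => ?_
        rw [Finset.mem_filter] at hp
        exact hpair p hp.2

end CaseFZ
section CaseNoFull

open Finset
open scoped Classical

variable {α : Type*} [Fintype α]

lemma sum_swap_of_symm {s : Finset (α × α)} (hs : ∀ p ∈ s, p.swap ∈ s) (g : α → α → ℕ) :
    ∑ p ∈ s, g p.1 p.2 = ∑ p ∈ s, g p.2 p.1 :=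
  Finset.sum_nbij' Prod.swap Prod.swap hs hs
    (fun p _ => by simp) (fun p _ => by simp) (fun p _ => rfl)

lemma doubling {s : Finset (α × α)} (hs : ∀ p ∈ s, p.swap ∈ s) {n : ℕ} (hn : 1 ≤ n)
    (x : α → ℕ) (hmix : ∀ p ∈ s, (1 ≤ x p.1 ∧ x p.1 ≤ n - 1) ∧ (1 ≤ x p.2 ∧ x p.2 ≤ n - 1)) :
    (n - 1) * s.card ≤ ∑ p ∈ s, x p.1 * (n - x p.2) := by
  have hdbl : 2 * ∑ p ∈ s, x p.1 * (n - x p.2)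
      = ∑ p ∈ s, (x p.1 * (n - x p.2) + x p.2 * (n - x p.1)) := by
    rw [Finset.sum_add_distrib, two_mul]
    congr 1
    exact sum_swap_of_symm hs (fun a c => x a * (n - x c))
  have hper : ∀ p ∈ s, 2 * (n - 1) ≤ x p.1 * (n - x p.2) + x p.2 * (n - x p.1) := by
    intro p hp
    obtain ⟨⟨h1, h2⟩, h3, h4⟩ := hmix p hp
    exact pair_bound hn (mul_bound1 h1 h2 hn) (mul_bound1 h3 h4 hn)
  have hlow : s.card * (2 * (n - 1)) ≤ 2 * ∑ p ∈ s, x p.1 * (n - x p.2) := by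
    rw [hdbl]
    calc s.card * (2 * (n - 1)) = s.card • (2 * (n - 1)) := by rw [smul_eq_mul]
      _ ≤ _ := Finset.card_nsmul_le_sum s _ _ hper
  have hlow2 : 2 * ((n - 1) * s.card) ≤ 2 * ∑ p ∈ s, x p.1 * (n - x p.2) := by
    calc 2 * ((n - 1) * s.card) = s.card * (2 * (n - 1)) := by ring
      _ ≤ _ := hlow
  omega

lemma num1 {n dlt dv xv : ℕ} (hn : 4 ≤ n) (hdlt : 1 ≤ dlt) (hdv : dlt ≤ dv)
    (h2 : 2 ≤ xv) (hxn : xv ≤ n - 1) :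
    2 * n * dlt + 2 * n - 4 ≤ xv * (n - xv) + dv * (xv * n) := by
  rw [Nat.sub_le_iff_le_add]
  have hxn' : xv ≤ n := by omega
  zify [hxn']
  have h2' : (2 : ℤ) ≤ xv := by exact_mod_cast h2
  have hxn'' : (xv : ℤ) ≤ (n : ℤ) - 1 := by
    have h := hxn
    have hn1 : 1 ≤ n := by omega
    zify [hn1] at h
    exact h
  have hdv' : (dlt : ℤ) ≤ dv := by exact_mod_cast hdv
  have hd1 : (1 : ℤ) ≤ dlt := by exact_mod_cast hdlt
  have hn' : (4 : ℤ) ≤ n := by exact_mod_cast hn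
  nlinarith [mul_nonneg (sub_nonneg.2 h2')
      (sub_nonneg.2 (show (xv : ℤ) ≤ 2 * n - 2 by linarith)),
    mul_nonneg (mul_nonneg (sub_nonneg.2 hd1)
      (show (0 : ℤ) ≤ n by linarith)) (sub_nonneg.2 h2'),
    mul_nonneg (sub_nonneg.2 hdv')
      (show (0 : ℤ) ≤ (xv : ℤ) * n by positivity)]

lemma num2 {n dlt q b : ℕ} (hn : 4 ≤ n) (hdlt : 1 ≤ dlt) (hq : q ≤ 2)
    (hD : 2 * dlt ≤ q + b) :
    2 * n * dlt + 2 * n - 4 ≤ (n - 1) * 2 + ((n - 1) * q + n * b) := by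
  rw [Nat.sub_le_iff_le_add]
  have hn1 : 1 ≤ n := by omega
  zify [hn1]
  have h1 : (2 : ℤ) * dlt ≤ (q : ℤ) + b := by exact_mod_cast hD
  have h2 : (q : ℤ) ≤ 2 := by exact_mod_cast hq
  have h3 : (1 : ℤ) ≤ dlt := by exact_mod_cast hdlt
  have h4 : (4 : ℤ) ≤ n := by exact_mod_cast hn
  nlinarith [mul_nonneg (show (0 : ℤ) ≤ n by linarith)
    (sub_nonneg.2 (show (2 : ℤ) * dlt ≤ (q : ℤ) + b from h1))]

lemma num3 {n dlt s q b : ℕ} (hn : 4 ≤ n) (hdlt : 1 ≤ dlt) (hs : 3 ≤ s)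
    (hD : s * dlt ≤ q + b) :
    2 * n * dlt + 2 * n - 4 ≤ (n - 1) * s + ((n - 1) * q + n * b) := by
  rw [Nat.sub_le_iff_le_add]
  have hn1 : 1 ≤ n := by omega
  zify [hn1]
  have h1 : (s : ℤ) * dlt ≤ (q : ℤ) + b := by exact_mod_cast hD
  have h3 : (1 : ℤ) ≤ dlt := by exact_mod_cast hdlt
  have h4 : (4 : ℤ) ≤ n := by exact_mod_cast hn
  have h5 : (3 : ℤ) ≤ s := by exact_mod_cast hs
  nlinarith [mul_nonneg (show (0 : ℤ) ≤ (n : ℤ) - 1 by linarith)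
      (sub_nonneg.2 h1),
    mul_nonneg (mul_nonneg (show (0 : ℤ) ≤ (n : ℤ) - 1 by linarith)
      (show (0 : ℤ) ≤ (s : ℤ) - 3 by linarith))
      (show (0 : ℤ) ≤ (dlt : ℤ) + 1 by linarith),
    mul_nonneg (show (0 : ℤ) ≤ (b : ℤ) by positivity)
      (show (0 : ℤ) ≤ (1 : ℤ) by norm_num)]

lemma caseNoFull (G : SimpleGraph α) (hG : G.Connected) (hm : 2 ≤ Fintype.card α)
    (n : ℕ) (hn : 4 ≤ n) (x : α → ℕ) (hnF : ∀ a, x a ≤ n - 1) (h2 : 2 ≤ ∑ a, x a) :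
    min ((n - 1) * (Fintype.card α + 2 * numEdges G)) (2 * n * minDeg G + 2 * n - 4)
      ≤ ∑ a : α, x a * (n - x a)
        + ∑ p ∈ (univ.filter fun p : α × α => G.Adj p.1 p.2), x p.1 * (n - x p.2) := by
  set d : α → ℕ := fun a => (univ.filter fun c => G.Adj a c).card with hd
  have hdδ : ∀ a, minDeg G ≤ d a := fun a =>
    (minDeg_le_deg G a).trans (le_of_eq (deg_eq_degFilter G a))
  have hδ1 : 1 ≤ minDeg G := one_le_minDeg hG hm
  have hn1 : 1 ≤ n := by omega
  by_cases hSU : ∀ a, x a ≠ 0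
  · -- all vertices mixed : T2 bound
    refine (min_le_left _ _).trans ?_
    have hvert : Fintype.card α * (n - 1) ≤ ∑ a : α, x a * (n - x a) := by
      calc Fintype.card α * (n - 1) = (univ : Finset α).card • (n - 1) := by
            rw [smul_eq_mul, Finset.card_univ]
        _ ≤ _ := Finset.card_nsmul_le_sum _ _ _
            (fun a _ => mul_bound1 (Nat.one_le_iff_ne_zero.2 (hSU a)) (hnF a) hn1)
    have hedge : (n - 1) * (2 * numEdges G)
        ≤ ∑ p ∈ (univ.filter fun p : α × α => G.Adj p.1 p.2), x p.1 * (n - x p.2) := by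
      rw [← adjP_card G]
      refine doubling ?_ hn1 x ?_
      · rintro ⟨a, c⟩ hp
        rw [Finset.mem_filter] at hp ⊢
        exact ⟨Finset.mem_univ _, hp.2.symm⟩
      · intro p _
        exact ⟨⟨Nat.one_le_iff_ne_zero.2 (hSU p.1), hnF p.1⟩,
          Nat.one_le_iff_ne_zero.2 (hSU p.2), hnF p.2⟩
    calc (n - 1) * (Fintype.card α + 2 * numEdges G)
        = Fintype.card α * (n - 1) + (n - 1) * (2 * numEdges G) := by ring
      _ ≤ _ := add_le_add hvert hedge
  · -- some vertex empty : T3 bound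
    refine (min_le_right _ _).trans ?_
    set δ := minDeg G with hδ
    set S := (univ.filter fun a => x a ≠ 0) with hS
    have hSmem : ∀ a ∈ S, 1 ≤ x a ∧ x a ≤ n - 1 := by
      intro a ha
      rw [hS, Finset.mem_filter] at ha
      exact ⟨Nat.one_le_iff_ne_zero.2 ha.2, hnF a⟩
    have hsumS : ∑ a ∈ S, x a = ∑ a : α, x a :=
      Finset.sum_filter_of_ne (fun a _ h => h)
    -- edge sums
    set W := (univ.filter fun p : α × α => G.Adj p.1 p.2).filter (fun p => x p.1 ≠ 0) with hWdef
    set Q := W.filter (fun p => x p.2 ≠ 0) with hQdef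
    set Bc := W.filter (fun p => ¬ x p.2 ≠ 0) with hBdef
    have hWsum : ∑ p ∈ W, x p.1 * (n - x p.2)
        = ∑ p ∈ (univ.filter fun p : α × α => G.Adj p.1 p.2), x p.1 * (n - x p.2) := by
      refine Finset.sum_filter_of_ne (fun p _ h => ?_)
      intro h0
      rw [h0, zero_mul] at h
      exact h rfl
    have hQBsum : ∑ p ∈ W, x p.1 * (n - x p.2)
        = ∑ p ∈ Q, x p.1 * (n - x p.2) + ∑ p ∈ Bc, x p.1 * (n - x p.2) :=
      (Finset.sum_filter_add_sum_filter_not W _ _).symm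
    have hQcard : (n - 1) * Q.card ≤ ∑ p ∈ Q, x p.1 * (n - x p.2) := by
      refine doubling ?_ hn1 x ?_
      · rintro ⟨a, c⟩ hp
        simp only [hQdef, hWdef, Finset.mem_filter, Finset.mem_univ, true_and,
          Prod.swap_prod_mk] at hp ⊢
        exact ⟨⟨hp.1.1.symm, hp.2⟩, hp.1.2⟩
      · intro p hp
        simp only [hQdef, hWdef, Finset.mem_filter] at hp
        exact ⟨⟨Nat.one_le_iff_ne_zero.2 hp.1.2, hnF p.1⟩,
          Nat.one_le_iff_ne_zero.2 hp.2, hnF p.2⟩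
    have hBcard : n * Bc.card ≤ ∑ p ∈ Bc, x p.1 * (n - x p.2) := by
      calc n * Bc.card = Bc.card • n := by rw [smul_eq_mul, mul_comm]
        _ ≤ _ := by
          refine Finset.card_nsmul_le_sum _ _ _ (fun p hp => ?_)
          simp only [hBdef, hWdef, Finset.mem_filter] at hp
          have h1 : 1 ≤ x p.1 := Nat.one_le_iff_ne_zero.2 hp.1.2
          have h2 : x p.2 = 0 := by
            by_contra hcon
            exact hp.2 hcon
          rw [h2, Nat.sub_zero]
          calc n = 1 * n := (one_mul n).symm
            _ ≤ x p.1 * n := Nat.mul_le_mul_right n h1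
    have hWcard : W.card = ∑ a ∈ S, d a := by
      rw [Finset.card_filter, sum_adjP_eq G (fun a c => if x a ≠ 0 then 1 else 0)]
      have h1 : ∀ a : α, ∑ c ∈ (univ.filter fun c => G.Adj a c), (if x a ≠ 0 then 1 else 0)
          = (if x a ≠ 0 then d a else 0) := by
        intro a
        rw [Finset.sum_const, smul_eq_mul, hd]
        by_cases hxa : x a ≠ 0
        · rw [if_pos hxa, if_pos hxa, mul_one]
        · rw [if_neg hxa, if_neg hxa, mul_zero]
      rw [Finset.sum_congr rfl fun a _ => h1 a, ← Finset.sum_filter]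
    have hQBW : Q.card + Bc.card = W.card := by
      rw [hQdef, hBdef]
      exact Finset.card_filter_add_card_filter_not _
    have hDS : S.card * δ ≤ ∑ a ∈ S, d a := by
      calc S.card * δ = S.card • δ := by rw [smul_eq_mul]
        _ ≤ _ := Finset.card_nsmul_le_sum _ _ _ (fun a _ => hdδ a)
    have hvertS : (n - 1) * S.card ≤ ∑ a : α, x a * (n - x a) := by
      calc (n - 1) * S.card = S.card • (n - 1) := by rw [smul_eq_mul, mul_comm]
        _ ≤ ∑ a ∈ S, x a * (n - x a) := Finset.card_nsmul_le_sum _ _ _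
            (fun a ha => mul_bound1 (hSmem a ha).1 (hSmem a ha).2 hn1)
        _ ≤ _ := Finset.sum_le_sum_of_subset (Finset.filter_subset _ _)
    push_neg at hSU
    obtain ⟨a₀, ha₀⟩ := hSU
    have hSne : 1 ≤ S.card := by
      by_contra hcon
      have hS0 : S.card = 0 := by omega
      have : ∑ a ∈ S, x a = 0 := by
        rw [Finset.card_eq_zero.1 hS0, Finset.sum_empty]
      omega
    by_cases hs1 : S.card = 1
    · -- single supported vertex
      obtain ⟨v, hv⟩ := Finset.card_eq_one.1 hs1
      have hxv2 : 2 ≤ x v := by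
        have : ∑ a ∈ S, x a = x v := by rw [hv, Finset.sum_singleton]
        omega
      have hxvn : x v ≤ n - 1 := hnF v
      have hWconst : ∀ p ∈ W, x p.1 * (n - x p.2) = x v * n := by
        intro p hp
        simp only [hWdef, Finset.mem_filter] at hp
        have hp1 : p.1 ∈ S := by
          rw [hS, Finset.mem_filter]
          exact ⟨Finset.mem_univ _, hp.2⟩
        have hp1v : p.1 = v := by
          rw [hv, Finset.mem_singleton] at hp1
          exact hp1
        have hp2 : x p.2 = 0 := by
          by_contra hcon
          have hp2S : p.2 ∈ S := by
            rw [hS, Finset.mem_filter]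
            exact ⟨Finset.mem_univ _, hcon⟩
          rw [hv, Finset.mem_singleton] at hp2S
          exact (hp.1.2.ne) (hp1v.trans hp2S.symm)
        rw [hp1v, hp2, Nat.sub_zero]
      have hedge : d v * (x v * n)
          = ∑ p ∈ (univ.filter fun p : α × α => G.Adj p.1 p.2), x p.1 * (n - x p.2) := by
        rw [← hWsum, Finset.sum_congr rfl hWconst, Finset.sum_const, smul_eq_mul, hWcard,
          hv, Finset.sum_singleton]
      have hvert : x v * (n - x v) ≤ ∑ a : α, x a * (n - x a) :=
        Finset.single_le_sum (f := fun a => x a * (n - x a))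
          (fun a _ => Nat.zero_le _) (Finset.mem_univ v)
      have hnum : 2 * n * δ + 2 * n - 4 ≤ x v * (n - x v) + d v * (x v * n) :=
        num1 hn hδ1 (hdδ v) hxv2 hxvn
      calc 2 * n * δ + 2 * n - 4 ≤ x v * (n - x v) + d v * (x v * n) := hnum
        _ ≤ _ := by
            rw [hedge]
            exact add_le_add_left hvert _
    · -- at least two supported vertices
      have hs2' : 2 ≤ S.card := by omega
      have hmain : (n - 1) * S.card + ((n - 1) * Q.card + n * Bc.card)
          ≤ ∑ a : α, x a * (n - x a)
            + ∑ p ∈ (univ.filter fun p : α × α => G.Adj p.1 p.2), x p.1 * (n - x p.2) := by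
        refine add_le_add hvertS ?_
        rw [← hWsum, hQBsum]
        exact add_le_add hQcard hBcard
      refine le_trans ?_ hmain
      have hD : S.card * δ ≤ Q.card + Bc.card := by
        rw [hQBW, hWcard]
        exact hDS
      by_cases hs2 : S.card = 2
      · -- exactly two: need Q.card ≤ 2
        have hQ2 : Q.card ≤ 2 := by
          classical
          have hQsub : Q ⊆ S ×ˢ S := by
            intro p hp
            simp only [hQdef, hWdef, Finset.mem_filter] at hp
            simp only [Finset.mem_product, hS, Finset.mem_filter]
            exact ⟨⟨Finset.mem_univ _, hp.1.2⟩, Finset.mem_univ _, hp.2⟩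
          set diag := S.image (fun a => (a, a)) with hdiag
          have hdisj : Disjoint Q diag := by
            rw [Finset.disjoint_left]
            intro p hp hpd
            rw [hdiag, Finset.mem_image] at hpd
            obtain ⟨a, -, ha⟩ := hpd
            simp only [hQdef, hWdef, Finset.mem_filter, Finset.mem_univ, true_and] at hp
            have := hp.1.1.ne
            rw [← ha] at this
            exact this rfl
          have hdsub : diag ⊆ S ×ˢ S := by
            intro p hp
            rw [hdiag, Finset.mem_image] at hp
            obtain ⟨a, haS, ha⟩ := hp
            rw [← ha, Finset.mem_product]
            exact ⟨haS, haS⟩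
          have hcard : Q.card + diag.card ≤ (S ×ˢ S).card := by
            rw [← Finset.card_union_of_disjoint hdisj]
            exact Finset.card_le_card (Finset.union_subset hQsub hdsub)
          have hdc : diag.card = S.card :=
            Finset.card_image_of_injective S (fun a b hab => (Prod.ext_iff.1 hab).1)
          rw [Finset.card_product, hdc, hs2] at hcard
          omega
        rw [hs2] at hD ⊢
        exact num2 hn hδ1 hQ2 hD
      · have hs3 : 3 ≤ S.card := by omega
        exact num3 hn hδ1 hs3 hD

end CaseNoFull
section Cuts

open Finset
open scoped Classical

variable {α : Type*} [Fintype α]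

lemma restricted_of_nbhd {β : Type*} [Finite β] (P : SimpleGraph β) (X : Set β)
    {u v : β} (hu : u ∈ X) (hv : v ∉ X)
    (h : ∀ p : β, ∃ q, P.Adj p q ∧ ((p ∈ X ∧ q ∈ X) ∨ (p ∉ X ∧ q ∉ X))) :
    IsKRestrictedEdgeCut P 2 (edgeBoundary P X) := by
  refine ⟨edgeBoundary_subset_edgeSet _ _, edgeBoundary_disconnects hu hv,
    supp_two_le (fun p => ?_)⟩
  obtain ⟨q, hq, hcase⟩ := h p
  exact ⟨q, SimpleGraph.deleteEdges_adj.2 ⟨hq, not_mem_edgeBoundary_of_both hcase⟩⟩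

lemma exists_fin_ne {n : ℕ} (hn : 2 ≤ n) (b : Fin n) : ∃ b' : Fin n, b' ≠ b := by
  have : 1 < Fintype.card (Fin n) := by simp; omega
  exact Fintype.exists_ne_of_one_lt_card this b

lemma exists_fin_notmem {n : ℕ} {s : Finset (Fin n)} (h : s.card < n) :
    ∃ b : Fin n, b ∉ s := by
  by_contra hcon
  push_neg at hcon
  have h2 : (univ : Finset (Fin n)) ⊆ s := fun b _ => hcon b
  have h3 := Finset.card_le_card h2
  simp only [Finset.card_univ, Fintype.card_fin] at h3
  omega

lemma xc_layerset {n : ℕ} (B : Set α) (a : α) :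
    xc {p : α × Fin n | p.1 ∈ B} a = if a ∈ B then n else 0 := by
  by_cases ha : a ∈ B
  · rw [if_pos ha]
    rw [xc, show (univ.filter fun b : Fin n => (a, b) ∈ {p : α × Fin n | p.1 ∈ B})
      = univ from Finset.filter_true_of_mem (fun b _ => ha)]
    simp
  · rw [if_neg ha]
    rw [xc, show (univ.filter fun b : Fin n => (a, b) ∈ {p : α × Fin n | p.1 ∈ B})
      = ∅ from Finset.filter_false_of_mem (fun b _ => ha)]
    simp

lemma bval1 (G : SimpleGraph α) {n : ℕ} (B : Set α) :
    (edgeBoundary (strongProd G (completeGraph (Fin n))) {p : α × Fin n | p.1 ∈ B}).ncard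
      = n ^ 2 * (edgeBoundary G B).ncard := by
  rw [prod_boundary_card]
  have hvert : ∑ a : α, xc {p : α × Fin n | p.1 ∈ B} a
      * (n - xc {p : α × Fin n | p.1 ∈ B} a) = 0 := by
    refine Finset.sum_eq_zero fun a _ => ?_
    rw [xc_layerset]
    by_cases ha : a ∈ B
    · rw [if_pos ha]; simp
    · rw [if_neg ha]; simp
  rw [hvert, zero_add]
  have hedge : ∀ p : α × α, p ∈ (univ.filter fun p : α × α => G.Adj p.1 p.2) →
      xc {q : α × Fin n | q.1 ∈ B} p.1 * (n - xc {q : α × Fin n | q.1 ∈ B} p.2)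
        = if p.1 ∈ B ∧ p.2 ∉ B then n * n else 0 := by
    intro p _
    rw [xc_layerset, xc_layerset]
    by_cases h1 : p.1 ∈ B <;> by_cases h2 : p.2 ∈ B <;>
      simp [h1, h2]
  rw [Finset.sum_congr rfl hedge, ← Finset.sum_filter, Finset.sum_const, smul_eq_mul]
  rw [Finset.filter_filter]
  have hcard : ((univ : Finset (α × α)).filter
        fun p => G.Adj p.1 p.2 ∧ p.1 ∈ B ∧ p.2 ∉ B).card
      = (edgeBoundary G B).ncard := by
    rw [edgeBoundary_ncard]
  rw [hcard]
  ring

end Cuts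
section Cuts2

open Finset
open scoped Classical

variable {α : Type*} [Fintype α]

lemma xc_layer2 {n : ℕ} (y₀ : Fin n) (a : α) :
    xc {p : α × Fin n | p.2 = y₀} a = 1 := by
  rw [xc]
  have htail : (univ.filter fun b : Fin n => b = y₀).card = 1 := by
    rw [Finset.filter_eq']
    simp
  exact (card_filter_ext2 _ _ _ _ (fun b => Iff.rfl)).trans htail

lemma bval2 (G : SimpleGraph α) {n : ℕ} (hn : 1 ≤ n) (y₀ : Fin n) :
    (edgeBoundary (strongProd G (completeGraph (Fin n))) {p : α × Fin n | p.2 = y₀}).ncard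
      = (n - 1) * (Fintype.card α + 2 * numEdges G) := by
  rw [prod_boundary_card]
  have hvert : ∑ a : α, xc {p : α × Fin n | p.2 = y₀} a
      * (n - xc {p : α × Fin n | p.2 = y₀} a) = Fintype.card α * (n - 1) := by
    rw [Finset.sum_congr rfl (fun a _ => by rw [xc_layer2, one_mul]),
      Finset.sum_const, smul_eq_mul, Finset.card_univ]
  have hedge : ∑ p ∈ (univ.filter fun p : α × α => G.Adj p.1 p.2),
      xc {q : α × Fin n | q.2 = y₀} p.1 * (n - xc {q : α × Fin n | q.2 = y₀} p.2)
      = 2 * numEdges G * (n - 1) := by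
    rw [Finset.sum_congr rfl (fun p _ => by rw [xc_layer2, xc_layer2, one_mul]),
      Finset.sum_const, smul_eq_mul, adjP_card]
  rw [hvert, hedge]
  ring

lemma xc_pairset {n : ℕ} (w : α) (y₀ y₁ : Fin n) (hne : y₀ ≠ y₁) (a : α) :
    xc {p : α × Fin n | p.1 = w ∧ (p.2 = y₀ ∨ p.2 = y₁)} a
      = if a = w then 2 else 0 := by
  by_cases ha : a = w
  · rw [if_pos ha, xc]
    have htail : (univ.filter fun b : Fin n => b = y₀ ∨ b = y₁).card = 2 := by
      rw [show (univ.filter fun b : Fin n => b = y₀ ∨ b = y₁) = {y₀, y₁} from by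
        ext b; simp]
      exact Finset.card_pair hne
    exact (card_filter_ext2 _ _ _ _ (fun b => by simp [Set.mem_setOf_eq, ha])).trans htail
  · rw [if_neg ha, xc]
    have htail : (univ.filter fun _ : Fin n => False).card = 0 := by simp
    exact (card_filter_ext2 _ _ _ _ (fun b => by simp [Set.mem_setOf_eq, ha])).trans htail

lemma bval3 (G : SimpleGraph α) {n : ℕ} (hn : 2 ≤ n) (w : α) (y₀ y₁ : Fin n)
    (hne : y₀ ≠ y₁) :
    (edgeBoundary (strongProd G (completeGraph (Fin n)))
        {p : α × Fin n | p.1 = w ∧ (p.2 = y₀ ∨ p.2 = y₁)}).ncard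
      = 2 * n * deg G w + 2 * n - 4 := by
  set X := {p : α × Fin n | p.1 = w ∧ (p.2 = y₀ ∨ p.2 = y₁)} with hX
  rw [prod_boundary_card]
  have hvert : ∑ a : α, xc X a * (n - xc X a) = 2 * (n - 2) := by
    have h1 : ∀ a : α, xc X a * (n - xc X a) = if a = w then 2 * (n - 2) else 0 := by
      intro a
      rw [hX, xc_pairset w y₀ y₁ hne]
      by_cases ha : a = w <;> simp [ha]
    rw [Finset.sum_congr rfl (fun a _ => h1 a), Finset.sum_ite_eq' univ w
      (fun _ => 2 * (n - 2)), if_pos (Finset.mem_univ w)]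
  have hedge : ∑ p ∈ (univ.filter fun p : α × α => G.Adj p.1 p.2),
      xc X p.1 * (n - xc X p.2) = deg G w * (2 * n) := by
    have h1 : ∀ p : α × α, p ∈ (univ.filter fun p : α × α => G.Adj p.1 p.2) →
        xc X p.1 * (n - xc X p.2) = if p.1 = w then 2 * n else 0 := by
      intro p hp
      rw [Finset.mem_filter] at hp
      rw [hX, xc_pairset w y₀ y₁ hne, xc_pairset w y₀ y₁ hne]
      by_cases h1 : p.1 = w
      · have h2 : p.2 ≠ w := by
          intro hcon
          exact hp.2.ne (h1.trans hcon.symm)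
        rw [if_pos h1, if_pos h1, if_neg h2, Nat.sub_zero]
      · rw [if_neg h1, if_neg h1, zero_mul]
    rw [Finset.sum_congr rfl h1, ← Finset.sum_filter, Finset.sum_const, smul_eq_mul]
    congr 1
    rw [Finset.filter_filter, deg_eq_degFilter]
    refine Finset.card_nbij' (fun p => p.2) (fun c => (w, c)) ?_ ?_ ?_ ?_
    · rintro ⟨a, c⟩ hp
      simp only [Finset.mem_coe, Finset.mem_filter, Finset.mem_univ, true_and] at hp ⊢
      obtain ⟨hq1, hq2⟩ := hp
      have hq2' : a = w := hq2
      subst hq2'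
      exact hq1
    · intro c hc
      simp only [Finset.mem_coe, Finset.mem_filter, Finset.mem_univ, true_and] at hc ⊢
      exact ⟨hc, by trivial⟩
    · rintro ⟨a, c⟩ hp
      simp only [Finset.mem_coe, Finset.mem_filter, Finset.mem_univ, true_and] at hp
      have hq2' : a = w := hp.2
      subst hq2'
      rfl
    · intro c _; rfl
  rw [hvert, hedge, show deg G w * (2 * n) = 2 * n * deg G w from by ring]
  omega

end Cuts2
section FLower

open Finset
open scoped Classical

variable {α : Type*} [Fintype α]

lemma f_symm (G : SimpleGraph α) (n : ℕ) (x : α → ℕ) (hx : ∀ a, x a ≤ n) :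
    ∑ a : α, (n - x a) * (n - (n - x a))
      + ∑ p ∈ (univ.filter fun p : α × α => G.Adj p.1 p.2), (n - x p.1) * (n - (n - x p.2))
    = ∑ a : α, x a * (n - x a)
      + ∑ p ∈ (univ.filter fun p : α × α => G.Adj p.1 p.2), x p.1 * (n - x p.2) := by
  congr 1
  · refine Finset.sum_congr rfl fun a _ => ?_
    rw [Nat.sub_sub_self (hx a), mul_comm]
  · calc ∑ p ∈ (univ.filter fun p : α × α => G.Adj p.1 p.2),
          (n - x p.1) * (n - (n - x p.2))
        = ∑ p ∈ (univ.filter fun p : α × α => G.Adj p.1 p.2), (n - x p.1) * x p.2 := by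
          refine Finset.sum_congr rfl fun p _ => ?_
          rw [Nat.sub_sub_self (hx p.2)]
      _ = ∑ p ∈ (univ.filter fun p : α × α => G.Adj p.1 p.2), (n - x p.2) * x p.1 :=
          sum_adjP_swap G (fun a c => (n - x a) * x c)
      _ = _ := Finset.sum_congr rfl fun p _ => mul_comm _ _

lemma f_lower (G : SimpleGraph α) (hG : G.Connected) (hm : 2 ≤ Fintype.card α)
    (n : ℕ) (hn : 4 ≤ n) (x : α → ℕ) (hx : ∀ a, x a ≤ n)
    (h2 : 2 ≤ ∑ a : α, x a) (h2' : 2 ≤ ∑ a : α, (n - x a)) :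
    min (n ^ 2 * edgeConn G)
      (min ((n - 1) * (Fintype.card α + 2 * numEdges G)) (2 * n * minDeg G + 2 * n - 4))
    ≤ ∑ a : α, x a * (n - x a)
      + ∑ p ∈ (univ.filter fun p : α × α => G.Adj p.1 p.2), x p.1 * (n - x p.2) := by
  by_cases hF : ∃ a, x a = n
  · by_cases hZ : ∃ a, x a = 0
    · exact (min_le_left _ _).trans ((caseFZ G n x hx hF hZ).trans (Nat.le_add_left _ _))
    · push_neg at hZ
      refine (min_le_right _ _).trans ?_
      have hy : ∀ a, (n - x a) ≤ n - 1 := fun a => by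
        have h1 := hZ a
        have h2 := hx a
        omega
      have hcase := caseNoFull G hG hm n hn (fun a => n - x a) hy h2'
      exact hcase.trans (le_of_eq (f_symm G n x hx))
  · push_neg at hF
    refine (min_le_right _ _).trans ?_
    exact caseNoFull G hG hm n hn x (fun a => by
      have h1 := hF a
      have h2 := hx a
      omega) h2

end FLower
section Final

open Finset
open scoped Classical

variable {α : Type*} [Fintype α]

lemma lam_lower (G : SimpleGraph α) (hG : G.Connected) (hm : 2 ≤ Fintype.card α)
    (n : ℕ) (hn : 4 ≤ n) (S : Set (Sym2 (α × Fin n)))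
    (hS : IsKRestrictedEdgeCut (strongProd G (completeGraph (Fin n))) 2 S) :
    min (n ^ 2 * edgeConn G)
      (min ((n - 1) * (Fintype.card α + 2 * numEdges G)) (2 * n * minDeg G + 2 * n - 4))
    ≤ S.ncard := by
  obtain ⟨hsub, hdisc, hcomp⟩ := hS
  haveI hne1 : Nonempty α := Fintype.card_pos_iff.1 (by omega)
  haveI hne2 : Nonempty (Fin n) := ⟨⟨0, by omega⟩⟩
  have hnp : ¬ ((strongProd G (completeGraph (Fin n))).deleteEdges S).Preconnected :=
    fun h => hdisc ⟨h⟩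
  rw [SimpleGraph.Preconnected] at hnp
  push_neg at hnp
  obtain ⟨u, v, hnr⟩ := hnp
  set C := ((strongProd G (completeGraph (Fin n))).deleteEdges S).connectedComponentMk u
    with hC
  set X := C.supp with hXdef
  have hsubc : (((strongProd G (completeGraph (Fin n))).deleteEdges S).connectedComponentMk
      v).supp ⊆ Xᶜ := by
    intro w hw hwX
    rw [SimpleGraph.ConnectedComponent.mem_supp_iff] at hw
    have hwX' : ((strongProd G (completeGraph (Fin n))).deleteEdges S).connectedComponentMk w
        = ((strongProd G (completeGraph (Fin n))).deleteEdges S).connectedComponentMk u := hwX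
    exact hnr (SimpleGraph.ConnectedComponent.exact (hwX'.symm.trans hw))
  have h2X : 2 ≤ X.ncard := hcomp C
  have h2Xc : 2 ≤ Xᶜ.ncard := le_trans (hcomp _) (Set.ncard_le_ncard hsubc (Set.toFinite _))
  have hbsub : edgeBoundary (strongProd G (completeGraph (Fin n))) X ⊆ S :=
    edgeBoundary_supp_subset C
  have hble : (edgeBoundary (strongProd G (completeGraph (Fin n))) X).ncard ≤ S.ncard :=
    Set.ncard_le_ncard hbsub (Set.toFinite _)
  refine le_trans ?_ hble
  rw [prod_boundary_card]
  refine f_lower G hG hm n hn (xc X) (xc_le X) ?_ ?_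
  · rw [← ncard_eq_sum_xc]; exact h2X
  · rw [← ncard_compl_eq_sum_xc]; exact h2Xc

end Final
section Upper

open Finset
open scoped Classical

variable {α : Type*} [Fintype α]

lemma lamK_le_boundary (G : SimpleGraph α) {n : ℕ} (X : Set (α × Fin n))
    (h : IsKRestrictedEdgeCut (strongProd G (completeGraph (Fin n))) 2
      (edgeBoundary (strongProd G (completeGraph (Fin n))) X)) :
    lamK (strongProd G (completeGraph (Fin n))) 2
      ≤ ((edgeBoundary (strongProd G (completeGraph (Fin n))) X).ncard : ℕ∞) :=
  sInf_le ⟨_, h, rfl⟩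

lemma hub1 (G : SimpleGraph α) (hm : 2 ≤ Fintype.card α) {n : ℕ} (hn : 4 ≤ n) :
    lamK (strongProd G (completeGraph (Fin n))) 2 ≤ ((n ^ 2 * edgeConn G : ℕ) : ℕ∞) := by
  haveI hne1 : Nonempty α := Fintype.card_pos_iff.1 (by omega)
  -- a minimum edge cut exists
  have hEcut : IsEdgeCut G G.edgeSet := by
    refine ⟨subset_rfl, fun hcon => ?_⟩
    obtain ⟨u, v, huv⟩ := Fintype.exists_pair_of_one_lt_card (α := α) (by omega)
    obtain ⟨w⟩ := hcon.preconnected u v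
    cases w with
    | nil => exact huv rfl
    | cons h _ =>
      rw [SimpleGraph.deleteEdges_adj] at h
      exact h.2 (by simpa using h.1)
  obtain ⟨S₀, hS₀, hS₀card⟩ :=
    Nat.sInf_mem (⟨G.edgeSet.ncard, G.edgeSet, hEcut, rfl⟩ :
      Set.Nonempty {k | ∃ S : Set (Sym2 α), IsEdgeCut G S ∧ S.ncard = k})
  have hnp : ¬ (G.deleteEdges S₀).Preconnected := fun h => hS₀.2 ⟨h⟩
  rw [SimpleGraph.Preconnected] at hnp
  push_neg at hnp
  obtain ⟨u, v, hnr⟩ := hnp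
  set B := ((G.deleteEdges S₀).connectedComponentMk u).supp with hB
  have huB : u ∈ B := rfl
  have hvB : v ∉ B := by
    intro h
    rw [hB, SimpleGraph.ConnectedComponent.mem_supp_iff] at h
    exact hnr (SimpleGraph.ConnectedComponent.exact h).symm
  have hBle : (edgeBoundary G B).ncard ≤ edgeConn G := by
    rw [show edgeConn G = S₀.ncard from hS₀card.symm]
    exact Set.ncard_le_ncard (edgeBoundary_supp_subset _) (Set.toFinite _)
  have hrest : IsKRestrictedEdgeCut (strongProd G (completeGraph (Fin n))) 2
      (edgeBoundary (strongProd G (completeGraph (Fin n))) {p : α × Fin n | p.1 ∈ B}) := by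
    refine restricted_of_nbhd _ _ (u := (u, ⟨0, by omega⟩)) (v := (v, ⟨0, by omega⟩))
      huB hvB ?_
    intro p
    obtain ⟨b', hb'⟩ := exists_fin_ne (by omega) p.2
    refine ⟨(p.1, b'), ?_, ?_⟩
    · rw [strongProd_adj_iff]
      exact Or.inl ⟨rfl, hb'.symm⟩
    · by_cases hBp : p.1 ∈ B
      · exact Or.inl ⟨hBp, hBp⟩
      · exact Or.inr ⟨hBp, hBp⟩
  calc lamK (strongProd G (completeGraph (Fin n))) 2
      ≤ _ := lamK_le_boundary G _ hrest
    _ = ((n ^ 2 * (edgeBoundary G B).ncard : ℕ) : ℕ∞) := by rw [bval1]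
    _ ≤ _ := by
        exact_mod_cast Nat.mul_le_mul_left (n ^ 2) hBle

lemma hub2 (G : SimpleGraph α) (hG : G.Connected) (hm : 2 ≤ Fintype.card α)
    {n : ℕ} (hn : 4 ≤ n) :
    lamK (strongProd G (completeGraph (Fin n))) 2
      ≤ (((n - 1) * (Fintype.card α + 2 * numEdges G) : ℕ) : ℕ∞) := by
  haveI hne1 : Nonempty α := Fintype.card_pos_iff.1 (by omega)
  set y₀ : Fin n := ⟨0, by omega⟩ with hy₀
  set y₁ : Fin n := ⟨1, by omega⟩ with hy₁
  have hy01 : y₁ ≠ y₀ := by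
    rw [hy₀, hy₁]
    simp [Fin.ext_iff]
  obtain ⟨a₀⟩ := hne1
  have hrest : IsKRestrictedEdgeCut (strongProd G (completeGraph (Fin n))) 2
      (edgeBoundary (strongProd G (completeGraph (Fin n))) {p : α × Fin n | p.2 = y₀}) := by
    refine restricted_of_nbhd _ _ (u := (a₀, y₀)) (v := (a₀, y₁)) rfl hy01 ?_
    intro p
    by_cases hp2 : p.2 = y₀
    · obtain ⟨c, hc⟩ := exists_adj_of_connected hG hm p.1
      refine ⟨(c, y₀), ?_, Or.inl ⟨hp2, rfl⟩⟩
      rw [strongProd_adj_iff]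
      exact Or.inr hc
    · obtain ⟨b', hb'⟩ := exists_fin_notmem (s := {y₀, p.2})
        (lt_of_le_of_lt (Finset.card_insert_le _ _) (by simp; omega))
      simp only [Finset.mem_insert, Finset.mem_singleton, not_or] at hb'
      refine ⟨(p.1, b'), ?_, Or.inr ⟨hp2, hb'.1⟩⟩
      rw [strongProd_adj_iff]
      exact Or.inl ⟨rfl, fun h => hb'.2 h.symm⟩
  calc lamK (strongProd G (completeGraph (Fin n))) 2
      ≤ _ := lamK_le_boundary G _ hrest
    _ = _ := by rw [bval2 G (by omega) y₀]

lemma hub3 (G : SimpleGraph α) (hG : G.Connected) (hm : 2 ≤ Fintype.card α)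
    {n : ℕ} (hn : 4 ≤ n) :
    lamK (strongProd G (completeGraph (Fin n))) 2
      ≤ ((2 * n * minDeg G + 2 * n - 4 : ℕ) : ℕ∞) := by
  haveI hne1 : Nonempty α := Fintype.card_pos_iff.1 (by omega)
  obtain ⟨w, hw⟩ := exists_deg_eq_minDeg G
  set y₀ : Fin n := ⟨0, by omega⟩ with hy₀
  set y₁ : Fin n := ⟨1, by omega⟩ with hy₁
  set y₂ : Fin n := ⟨2, by omega⟩ with hy₂
  have hy01 : y₀ ≠ y₁ := by rw [hy₀, hy₁]; simp [Fin.ext_iff]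
  set X : Set (α × Fin n) := {p | p.1 = w ∧ (p.2 = y₀ ∨ p.2 = y₁)} with hX
  have huX : ((w, y₀) : α × Fin n) ∈ X := ⟨rfl, Or.inl rfl⟩
  have hvX : ((w, y₂) : α × Fin n) ∉ X := by
    rintro ⟨-, h | h⟩ <;> (rw [hy₀, hy₁, hy₂] at *; simp [Fin.ext_iff] at h)
  have hrest : IsKRestrictedEdgeCut (strongProd G (completeGraph (Fin n))) 2
      (edgeBoundary (strongProd G (completeGraph (Fin n))) X) := by
    refine restricted_of_nbhd _ _ huX hvX ?_
    intro p
    by_cases hpw : p.1 = w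
    · by_cases hin : p.2 = y₀ ∨ p.2 = y₁
      · rcases hin with h0 | h1
        · refine ⟨(w, y₁), ?_, Or.inl ⟨⟨hpw, Or.inl h0⟩, rfl, Or.inr rfl⟩⟩
          rw [strongProd_adj_iff]
          exact Or.inl ⟨hpw, by rw [h0]; exact hy01⟩
        · refine ⟨(w, y₀), ?_, Or.inl ⟨⟨hpw, Or.inr h1⟩, rfl, Or.inl rfl⟩⟩
          rw [strongProd_adj_iff]
          exact Or.inl ⟨hpw, by rw [h1]; exact hy01.symm⟩
      · obtain ⟨b', hb'⟩ := exists_fin_notmem (s := {p.2, y₀, y₁})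
          (lt_of_le_of_lt (le_trans (Finset.card_insert_le _ _)
            (by exact add_le_add_left (Finset.card_insert_le _ _) 1)) (by simp; omega))
        simp only [Finset.mem_insert, Finset.mem_singleton, not_or] at hb'
        refine ⟨(p.1, b'), ?_, Or.inr ⟨fun h => hin h.2, fun h => ?_⟩⟩
        · rw [strongProd_adj_iff]
          exact Or.inl ⟨rfl, fun h => hb'.1 h.symm⟩
        · rcases h.2 with h2 | h2
          · exact hb'.2.1 h2
          · exact hb'.2.2 h2
    · obtain ⟨b', hb'⟩ := exists_fin_ne (by omega) p.2
      refine ⟨(p.1, b'), ?_, Or.inr ⟨fun h => hpw h.1, fun h => hpw h.1⟩⟩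
      rw [strongProd_adj_iff]
      exact Or.inl ⟨rfl, hb'.symm⟩
  calc lamK (strongProd G (completeGraph (Fin n))) 2
      ≤ _ := lamK_le_boundary G _ hrest
    _ = ((2 * n * deg G w + 2 * n - 4 : ℕ) : ℕ∞) := by
        rw [hX, bval3 G (by omega) w y₀ y₁ hy01]
    _ = _ := by rw [hw]

end Upper
/-- For a connected graph G of order m ≥ 2 and n ≥ 4,
λ₂(G ⊠ Kₙ) = min{n²λ(G), (n-1)(m + 2e(G)), 2nδ(G) + 2n - 4}. -/
theorem stmt9 {α : Type*} [Fintype α] (G : SimpleGraph α) (n : ℕ)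
    (hG : G.Connected) (hm : 2 ≤ Fintype.card α) (hn : 4 ≤ n) :
    lamK (strongProd G (completeGraph (Fin n))) 2 =
      ((min (n ^ 2 * edgeConn G)
        (min ((n - 1) * (Fintype.card α + 2 * numEdges G))
          (2 * n * minDeg G + 2 * n - 4)) : ℕ) : ℕ∞) := by
  apply le_antisymm
  · have hcase : min (n ^ 2 * edgeConn G)
        (min ((n - 1) * (Fintype.card α + 2 * numEdges G))
          (2 * n * minDeg G + 2 * n - 4)) = n ^ 2 * edgeConn G
      ∨ min (n ^ 2 * edgeConn G)
        (min ((n - 1) * (Fintype.card α + 2 * numEdges G))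
          (2 * n * minDeg G + 2 * n - 4)) = (n - 1) * (Fintype.card α + 2 * numEdges G)
      ∨ min (n ^ 2 * edgeConn G)
        (min ((n - 1) * (Fintype.card α + 2 * numEdges G))
          (2 * n * minDeg G + 2 * n - 4)) = 2 * n * minDeg G + 2 * n - 4 := by
      omega
    rcases hcase with h | h | h <;> rw [h]
    · exact hub1 G hm hn
    · exact hub2 G hG hm hn
    · exact hub3 G hG hm hn
  · refine le_sInf ?_
    rintro b ⟨S, hS, rfl⟩
    exact_mod_cast lam_lower G hG hm n hn S hS
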